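/- Let X be a Coxeter graph satisfying condition (★), let s ∈ S(X), let x ∈ W_c(X) with xs ∉ W_c(X), and let w ∉ W_c(X) with ws ∈ W_c(X) and ws < w. Then D_{x,w}(q) = −1 if x = ws, and D_{x,w}(q) = 0 otherwise. -/

import Mathlib

/-!
Common setup: Coxeter systems, Bruhat order, fully commutative elements,
the Hecke algebra `H(X)`, the generalized Temperley--Lieb algebra `TL(X)`,
and the polynomial families `R`, `P` (Kazhdan--Lusztig), `D`, `a`, `L`.
-/

open LaurentPolynomial Polynomial

noncomputable section

namespace TLPaper

open scoped Classical

/-- The ring `A = ℤ[q^{1/2}, q^{-1/2}]`, modelled as Laurent polynomials over `ℤ`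
in the variable `T = q^{1/2}`. -/
abbrev A : Type := LaurentPolynomial ℤ

/-- The element `q = (q^{1/2})^2` of `A`. -/
def q : A := LaurentPolynomial.T 2

variable {B : Type*} {W : Type*} [Group W] {M : CoxeterMatrix B} (cs : CoxeterSystem M W)

/-- The Bruhat order on a Coxeter group: the reflexive-transitive closure of the relation
`x → xt` where `t` is a reflection and the length increases. -/
def bruhatLE : W → W → Prop :=
  Relation.ReflTransGen
    (fun x y => (∃ t : W, cs.IsReflection t ∧ y = x * t) ∧ cs.length x < cs.length y)

/-- Strict Bruhat order. -/
def bruhatLT (x w : W) : Prop := bruhatLE cs x w ∧ x ≠ w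

/-- A single commutation move on words: interchanging two adjacent commuting letters
(i.e. letters `i`, `j` with `M i j = 2`). -/
def CommMove (M : CoxeterMatrix B) (l₁ l₂ : List B) : Prop :=
  ∃ (a b : List B) (i j : B), M i j = 2 ∧ l₁ = a ++ i :: j :: b ∧ l₂ = a ++ j :: i :: b

/-- An element `w` is *fully commutative* if any reduced word for `w` can be obtained
from any other by a sequence of commutation moves. -/
def FullyCommutative (w : W) : Prop :=
  ∀ l₁ l₂ : List B, (cs.IsReduced l₁ ∧ cs.wordProd l₁ = w) →
    (cs.IsReduced l₂ ∧ cs.wordProd l₂ = w) →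
    Relation.ReflTransGen (CommMove M) l₁ l₂

/-- All the data of the paper: the Hecke algebra `H` of the Coxeter system `cs` with its
standard basis `Tw`, the `R`-polynomials, the Kazhdan--Lusztig polynomials `P`,
the generalized Temperley--Lieb algebra `TL = H/J` (with `proj` the canonical projection),
the `D`-polynomials, the `a`-polynomials, and the IC basis `c` with its `L`-polynomials.
The polynomial `L x w` is a polynomial in the variable `v = q^{-1/2}`;
all other polynomial families are polynomials in `q`. -/
structure TLContext {B : Type*} {W : Type*} [Group W] {M : CoxeterMatrix B}
    (cs : CoxeterSystem M W)
    (H : Type*) [Ring H] [Algebra A H] (TL : Type*) [Ring TL] [Algebra A TL] where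
  /-- The standard basis `{T_w}` of the Hecke algebra. -/
  Tw : W → H
  Tw_indep : LinearIndependent A Tw
  Tw_span : Submodule.span A (Set.range Tw) = ⊤
  Tw_one : Tw 1 = 1
  /-- Multiplication rule, case `ℓ(ws) > ℓ(w)`. -/
  Tw_mul_simple_of_lt : ∀ (w : W) (i : B),
    cs.length w < cs.length (w * cs.simple i) →
    Tw w * Tw (cs.simple i) = Tw (w * cs.simple i)
  /-- Multiplication rule, case `ℓ(ws) < ℓ(w)`. -/
  Tw_mul_simple_of_gt : ∀ (w : W) (i : B),
    cs.length (w * cs.simple i) < cs.length w →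
    Tw w * Tw (cs.simple i) = q • Tw (w * cs.simple i) + (q - 1) • Tw w
  /-- `Tinv w` is the inverse of `T_w` in `H`. -/
  Tinv : W → H
  Tw_mul_Tinv : ∀ w : W, Tw w * Tinv w = 1
  Tinv_mul_Tw : ∀ w : W, Tinv w * Tw w = 1
  /-- Bruhat lower sets are finite. -/
  finite_bruhatLE : ∀ w : W, {x | bruhatLE cs x w}.Finite
  /-- The `R`-polynomials. -/
  R : W → W → Polynomial ℤ
  R_self : ∀ w : W, R w w = 1
  R_eq_zero : ∀ x w : W, ¬ bruhatLE cs x w → R x w = 0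
  /-- `T_{w⁻¹}⁻¹ = ε_w q^{-ℓ(w)} Σ_{x ≤ w} ε_x R_{x,w}(q) T_x`. -/
  Tinv_eq : ∀ w : W, Tinv w⁻¹ =
    ((-1 : A) ^ cs.length w * LaurentPolynomial.T (-2 * (cs.length w : ℤ))) •
      ∑ᶠ x ∈ {x | bruhatLE cs x w},
        ((-1 : A) ^ cs.length x * Polynomial.aeval q (R x w)) • Tw x
  /-- The Kazhdan--Lusztig polynomials. -/
  P : W → W → Polynomial ℤ
  P_self : ∀ w : W, P w w = 1
  P_eq_zero : ∀ x w : W, ¬ bruhatLE cs x w → P x w = 0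
  /-- `deg P_{x,w} ≤ (ℓ(w) - ℓ(x) - 1)/2` for `x < w`. -/
  P_degree : ∀ x w : W, bruhatLT cs x w →
    2 * (P x w).natDegree + 1 ≤ cs.length w - cs.length x
  /-- The involution `ι` of the Hecke algebra. -/
  iotaH : H →+* H
  iotaH_involutive : ∀ h : H, iotaH (iotaH h) = h
  iotaH_Tw : ∀ w : W, iotaH (Tw w) = Tinv w⁻¹
  iotaH_smul : ∀ (a : A) (h : H),
    iotaH (a • h) = (LaurentPolynomial.invert (R := ℤ) a) • iotaH h
  /-- `ι` fixes the Kazhdan--Lusztig basis element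
  `C'_w = q^{-ℓ(w)/2} Σ_{x ≤ w} P_{x,w}(q) T_x`. -/
  iotaH_KL : ∀ w : W,
    iotaH ((LaurentPolynomial.T (-(cs.length w : ℤ)) : A) •
      ∑ᶠ x ∈ {x | bruhatLE cs x w}, (Polynomial.aeval q (P x w)) • Tw x) =
    (LaurentPolynomial.T (-(cs.length w : ℤ)) : A) •
      ∑ᶠ x ∈ {x | bruhatLE cs x w}, (Polynomial.aeval q (P x w)) • Tw x
  /-- The canonical projection `σ : H → TL = H/J`. -/
  proj : H →ₐ[A] TL
  proj_surjective : Function.Surjective proj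
  /-- The kernel of `σ` is the two-sided ideal `J` generated by the elements
  `Σ_{w ∈ ⟨s_i, s_j⟩} T_w`, over all pairs of non-commuting generators `s_i, s_j`
  such that `s_i s_j` has finite order. -/
  proj_ker : ∀ h : H, proj h = 0 ↔ h ∈ Submodule.span A
    {x : H | ∃ (i j : B) (a b : H), M i j ≠ 0 ∧ M i j ≠ 1 ∧ M i j ≠ 2 ∧
      x = a * (∑ᶠ u ∈ (Subgroup.closure {cs.simple i, cs.simple j} : Set W), Tw u) * b}
  /-- The images `t_w = σ(T_w)`, `w` fully commutative, are linearly independent. -/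
  t_indep : LinearIndependent A
    (fun x : {w : W // FullyCommutative cs w} => proj (Tw x.1))
  /-- The `D`-polynomials. -/
  D : W → W → Polynomial ℤ
  /-- `t_w = Σ_{x ∈ W_c, x ≤ w} D_{x,w}(q) t_x`. -/
  D_eq : ∀ w : W, proj (Tw w) =
    ∑ᶠ x ∈ {x | FullyCommutative cs x ∧ bruhatLE cs x w},
      (Polynomial.aeval q (D x w)) • proj (Tw x)
  D_self : ∀ w : W, FullyCommutative cs w → D w w = 1
  D_eq_zero : ∀ x w : W, ¬ (FullyCommutative cs x ∧ bruhatLE cs x w) → D x w = 0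
  /-- The `a`-polynomials. -/
  apol : W → W → Polynomial ℤ
  /-- `(t_{w⁻¹})⁻¹ = q^{-ℓ(w)} Σ_{y ∈ W_c, y ≤ w} a_{y,w}(q) t_y` for `w ∈ W_c`. -/
  apol_eq : ∀ w : W, FullyCommutative cs w →
    proj (Tinv w⁻¹) = (LaurentPolynomial.T (-2 * (cs.length w : ℤ)) : A) •
      ∑ᶠ y ∈ {y | FullyCommutative cs y ∧ bruhatLE cs y w},
        (Polynomial.aeval q (apol y w)) • proj (Tw y)
  apol_self : ∀ w : W, FullyCommutative cs w → apol w w = 1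
  apol_eq_zero : ∀ y w : W,
    ¬ (FullyCommutative cs y ∧ FullyCommutative cs w ∧ bruhatLE cs y w) → apol y w = 0
  /-- The involution `ι` of the Temperley--Lieb algebra. -/
  iotaTL : TL →+* TL
  iotaTL_involutive : ∀ x : TL, iotaTL (iotaTL x) = x
  iotaTL_t : ∀ w : W, iotaTL (proj (Tw w)) = proj (Tinv w⁻¹)
  iotaTL_smul : ∀ (a : A) (x : TL),
    iotaTL (a • x) = (LaurentPolynomial.invert (R := ℤ) a) • iotaTL x
  /-- The `L`-polynomials: `L x w` is a polynomial in the variable `v = q^{-1/2}`, and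
  `L_{x,w}(q^{-1/2})` is obtained by evaluating it at `T (-1) = q^{-1/2}`. -/
  L : W → W → Polynomial ℤ
  /-- The IC basis `{c_w}` of `TL`. -/
  c : W → TL
  /-- `c_w = Σ_{x ∈ W_c, x ≤ w} q^{-ℓ(x)/2} L_{x,w}(q^{-1/2}) t_x`. -/
  c_eq : ∀ w : W, FullyCommutative cs w →
    c w = ∑ᶠ x ∈ {x | FullyCommutative cs x ∧ bruhatLE cs x w},
      ((LaurentPolynomial.T (-(cs.length x : ℤ)) : A) *
        Polynomial.aeval (R := ℤ) ((LaurentPolynomial.T (-1) : A)) (L x w)) • proj (Tw x)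
  /-- Convention: `c_x = 0` for `x ∉ W_c`. -/
  c_eq_zero : ∀ w : W, ¬ FullyCommutative cs w → c w = 0
  /-- The IC basis is `ι`-invariant. -/
  c_invariant : ∀ w : W, FullyCommutative cs w → iotaTL (c w) = c w
  L_self : ∀ w : W, L w w = 1
  L_eq_zero : ∀ x w : W,
    ¬ (FullyCommutative cs x ∧ FullyCommutative cs w ∧ bruhatLE cs x w) → L x w = 0
  /-- `L_{x,w}(q^{-1/2}) ∈ q^{-1/2} ℤ[q^{-1/2}]` for `x < w`. -/
  L_coeff_zero : ∀ x w : W, bruhatLT cs x w → (L x w).coeff 0 = 0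

namespace TLContext

variable {B : Type*} {W : Type*} [Group W] {M : CoxeterMatrix B} {cs : CoxeterSystem M W}
  {H : Type*} [Ring H] [Algebra A H] {TL : Type*} [Ring TL] [Algebra A TL]
  (Ctx : TLContext cs H TL)

/-- `μ(x,w)`: the coefficient of `q^{(ℓ(w)-ℓ(x)-1)/2}` in the Kazhdan--Lusztig
polynomial `P_{x,w}(q)` (which is zero unless `ℓ(w) - ℓ(x)` is odd). -/
def mu (x w : W) : ℤ :=
  if Odd (cs.length w - cs.length x) then
    (Ctx.P x w).coeff ((cs.length w - cs.length x - 1) / 2)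
  else 0

/-- The Kazhdan--Lusztig basis element `C'_w = q^{-ℓ(w)/2} Σ_{x ≤ w} P_{x,w}(q) T_x`. -/
def KL (w : W) : H :=
  (LaurentPolynomial.T (-(cs.length w : ℤ)) : A) •
    ∑ᶠ x ∈ {x | bruhatLE cs x w}, (Polynomial.aeval q (Ctx.P x w)) • Ctx.Tw x

/-- Condition (★): the projection sends the Kazhdan--Lusztig basis element `C'_w`
to `c_w` if `w ∈ W_c` and to `0` otherwise. -/
def Star : Prop :=
  (∀ w : W, FullyCommutative cs w → Ctx.proj (Ctx.KL w) = Ctx.c w) ∧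
  (∀ w : W, ¬ FullyCommutative cs w → Ctx.proj (Ctx.KL w) = 0)

/-- `L_{x,w}(q^{-1/2})` as an element of `A`. -/
def Lq (x w : W) : A := Polynomial.aeval (R := ℤ) ((LaurentPolynomial.T (-1) : A)) (Ctx.L x w)

/-- `L_{x,w}(q^{1/2})` as an element of `A`. -/
def Lq' (x w : W) : A := Polynomial.aeval (R := ℤ) ((LaurentPolynomial.T 1 : A)) (Ctx.L x w)

end TLContext

/-!
Write `E_{x,u} = D_{x,u} + δ_{x,us}`, the coefficient of `t_x` in `t_u + t_{us}`. For `ws < w`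
we have `t_w + t_{ws} = t_{ws}(t_s + 1)` and `(t_s + 1)² = (q + 1)(t_s + 1)`, so multiplying
`t_w + t_{ws} = Σ_z E_{z,w} t_z` by `t_s + 1` and reading off the coefficient of `t_x`
(`x ∈ W_c`, `xs ∉ W_c`) gives `(q + 1) E_{x,w} = Σ_z E_{z,w} E_{x,zs}`; only `z < zs ∉ W_c`
contribute, since otherwise `t_z(t_s + 1)` is a multiple of `t_z + t_{zs}` with both terms in
`W_c`. By induction on `ℓ(w)` the terms with `ℓ(zs) < ℓ(w)` vanish. The others have
`ℓ(z) = ℓ(w) - 1`, and (★) forces `D_{z,w} = -P_{z,w}`, a constant by the degree bound on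
Kazhdan–Lusztig polynomials. Hence for `ℓ(x) = ℓ(w) - 1` the polynomial `(q + 1) E_{x,w}` is
constant, forcing `E_{x,w} = 0`; this kills the remaining terms for arbitrary `x`, and
`E_{x,w} = 0` is the claim.
-/

section CommutationClasses

variable {B : Type*} {M : CoxeterMatrix B}

theorem CommMove.symm {l₁ l₂ : List B} (h : CommMove M l₁ l₂) : CommMove M l₂ l₁ := by
  obtain ⟨p, t, i, j, hij, rfl, rfl⟩ := h
  exact ⟨p, t, j, i, M.symmetric j i ▸ hij, rfl, rfl⟩

instance : Std.Symm (CommMove M) := ⟨fun _ _ => CommMove.symm⟩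

theorem CommMove.cons (c : B) {l₁ l₂ : List B} (h : CommMove M l₁ l₂) :
    CommMove M (c :: l₁) (c :: l₂) := by
  obtain ⟨p, t, i, j, hij, rfl, rfl⟩ := h
  exact ⟨c :: p, t, i, j, hij, rfl, rfl⟩

theorem commEquiv_cons (c : B) {l₁ l₂ : List B}
    (h : Relation.ReflTransGen (CommMove M) l₁ l₂) :
    Relation.ReflTransGen (CommMove M) (c :: l₁) (c :: l₂) :=
  h.lift (c :: ·) fun _ _ => CommMove.cons c

theorem commEquiv_append_cons_of_forall_commute {c : B} {p : List B} (r : List B)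
    (hp : ∀ d ∈ p, M d c = 2) :
    Relation.ReflTransGen (CommMove M) (p ++ c :: r) (c :: (p ++ r)) := by
  induction p with
  | nil => rfl
  | cons d p ih =>
    refine (commEquiv_cons d (ih fun e he => hp e (List.mem_cons_of_mem d he))).tail ?_
    exact ⟨[], p ++ r, d, c, hp d List.mem_cons_self, rfl, rfl⟩

def pairFilter (a b : B) (l : List B) : List B := l.filter fun c => c = a ∨ c = b

theorem pairFilter_cons (a b c : B) (l : List B) :
    pairFilter a b (c :: l) =
      if c = a ∨ c = b then c :: pairFilter a b l else pairFilter a b l := by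
  by_cases h : c = a ∨ c = b <;> simp [pairFilter, h]

theorem pairFilter_append (a b : B) (l₁ l₂ : List B) :
    pairFilter a b (l₁ ++ l₂) = pairFilter a b l₁ ++ pairFilter a b l₂ :=
  List.filter_append ..

theorem mem_pairFilter {a b c : B} {l : List B} :
    c ∈ pairFilter a b l ↔ c ∈ l ∧ (c = a ∨ c = b) := by
  simp [pairFilter]

theorem CommMove.pairFilter_eq {a b : B} (hab : M a b ≠ 2) {l₁ l₂ : List B}
    (h : CommMove M l₁ l₂) : pairFilter a b l₁ = pairFilter a b l₂ := by
  obtain ⟨p, t, i, j, hij, rfl, rfl⟩ := h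
  simp only [pairFilter_append, pairFilter_cons]
  have : ¬ ((i = a ∨ i = b) ∧ (j = a ∨ j = b)) := by
    rintro ⟨rfl | rfl, rfl | rfl⟩ <;> simp_all [M.symmetric]
  by_cases hi : i = a ∨ i = b <;> by_cases hj : j = a ∨ j = b <;> simp_all

theorem pairFilter_eq_of_commEquiv {a b : B} (hab : M a b ≠ 2) {l₁ l₂ : List B}
    (h : Relation.ReflTransGen (CommMove M) l₁ l₂) :
    pairFilter a b l₁ = pairFilter a b l₂ := by
  induction h with
  | refl => rfl
  | tail _ hmove ih => exact ih.trans (hmove.pairFilter_eq hab)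

theorem commEquiv_of_pairFilter_eq {l₁ l₂ : List B}
    (h : ∀ a b, M a b ≠ 2 → pairFilter a b l₁ = pairFilter a b l₂) :
    Relation.ReflTransGen (CommMove M) l₁ l₂ := by
  induction l₁ generalizing l₂ with
  | nil =>
    cases l₂ with
    | nil => rfl
    | cons d t => simpa [pairFilter] using h d d (by simp)
  | cons c t ih =>
    have hc : c ∈ l₂ := by
      have := h c c (by simp)
      rw [pairFilter_cons, if_pos (Or.inl rfl)] at this
      exact (mem_pairFilter.mp (this ▸ List.mem_cons_self)).1
    obtain ⟨p, r, rfl, hcp⟩ := List.eq_append_cons_of_mem hc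
    have hcomm : ∀ d ∈ p, M d c = 2 := by
      intro d hd
      by_contra hdc
      -- the projection of `p ++ c :: r` to `{c, d}` would then start with `d`, not `c`
      have hfilt := h c d (by rwa [M.symmetric])
      rw [pairFilter_cons, if_pos (Or.inl rfl), pairFilter_append] at hfilt
      obtain ⟨e, u, he⟩ := List.exists_cons_of_ne_nil
        (List.ne_nil_of_mem (mem_pairFilter.mpr ⟨hd, Or.inr rfl⟩))
      rw [he, List.cons_append, List.cons.injEq] at hfilt
      exact hcp (hfilt.1 ▸ (mem_pairFilter.mp (he ▸ List.mem_cons_self)).1)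
    have hfront := commEquiv_append_cons_of_forall_commute r hcomm
    refine (commEquiv_cons c (ih fun a b hab => ?_)).trans (symm hfront)
    have := (h a b hab).trans (pairFilter_eq_of_commEquiv hab hfront)
    simp only [pairFilter_cons] at this
    split_ifs at this
    exacts [List.cons.inj this |>.2, this]

theorem commEquiv_iff_pairFilter_eq {l₁ l₂ : List B} :
    Relation.ReflTransGen (CommMove M) l₁ l₂ ↔
      ∀ a b, M a b ≠ 2 → pairFilter a b l₁ = pairFilter a b l₂ :=
  ⟨fun h _ _ hab => pairFilter_eq_of_commEquiv hab h, commEquiv_of_pairFilter_eq⟩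

theorem commEquiv_of_append_singleton {l₁ l₂ : List B} {j : B}
    (h : Relation.ReflTransGen (CommMove M) (l₁ ++ [j]) (l₂ ++ [j])) :
    Relation.ReflTransGen (CommMove M) l₁ l₂ := by
  rw [commEquiv_iff_pairFilter_eq] at h ⊢
  intro a b hab
  have hab' := h a b hab
  rw [pairFilter_append, pairFilter_append] at hab'
  exact List.append_cancel_right hab'

end CommutationClasses

section CoxeterGroups

variable {B : Type*} {W : Type*} [Group W] {M : CoxeterMatrix B} {cs : CoxeterSystem M W}

theorem length_le_of_bruhatLE {x w : W} (h : bruhatLE cs x w) : cs.length x ≤ cs.length w := by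
  induction h with
  | refl => rfl
  | tail _ hstep ih => exact ih.trans hstep.2.le

theorem eq_of_bruhatLE_of_length_le {x w : W} (h : bruhatLE cs x w)
    (hlen : cs.length w ≤ cs.length x) : x = w := by
  cases h with
  | refl => rfl
  | tail hle hstep =>
    exact absurd hlen (not_le.mpr ((length_le_of_bruhatLE hle).trans_lt hstep.2))

theorem length_lt_of_bruhatLE_of_ne {x w : W} (h : bruhatLE cs x w) (hne : x ≠ w) :
    cs.length x < cs.length w :=
  lt_of_not_ge fun hlen => hne (eq_of_bruhatLE_of_length_le h hlen)

theorem bruhatLE_mul_simple_of_isRightDescent {w : W} {i : B} (h : cs.IsRightDescent w i) :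
    bruhatLE cs (w * cs.simple i) w :=
  .single ⟨⟨cs.simple i, cs.isReflection_simple i, by simp⟩, h⟩

theorem isReduced_append_singleton {l : List B} (hl : cs.IsReduced l) {i : B}
    (hi : ¬ cs.IsRightDescent (cs.wordProd l) i) : cs.IsReduced (l ++ [i]) := by
  rw [CoxeterSystem.not_isRightDescent_iff] at hi
  simp [CoxeterSystem.IsReduced, cs.wordProd_append, hi, hl.eq]

theorem FullyCommutative.mul_simple_of_isRightDescent {z : W} (hz : FullyCommutative cs z)
    {i : B} (hdesc : cs.IsRightDescent z i) : FullyCommutative cs (z * cs.simple i) := by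
  have hasc := cs.isRightDescent_iff_not_isRightDescent_mul.mp hdesc
  have extend : ∀ l : List B, cs.IsReduced l ∧ cs.wordProd l = z * cs.simple i →
      cs.IsReduced (l ++ [i]) ∧ cs.wordProd (l ++ [i]) = z := fun l ⟨hl, hprod⟩ =>
    ⟨isReduced_append_singleton hl (hprod ▸ hasc), by simp [cs.wordProd_append, hprod]⟩
  exact fun l₁ l₂ h₁ h₂ =>
    commEquiv_of_append_singleton (hz _ _ (extend l₁ h₁) (extend l₂ h₂))

theorem FullyCommutative.not_isRightDescent {z : W} (hz : FullyCommutative cs z) {i : B}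
    (hzs : ¬ FullyCommutative cs (z * cs.simple i)) : ¬ cs.IsRightDescent z i :=
  fun hdesc => hzs (hz.mul_simple_of_isRightDescent hdesc)

end CoxeterGroups

theorem aeval_q_eq_toLaurent_expand (p : ℤ[X]) :
    Polynomial.aeval q p = Polynomial.toLaurent (Polynomial.expand ℤ 2 p) := by
  have hq : q = Polynomial.toLaurentAlg (Polynomial.X ^ 2 : ℤ[X]) := by
    rw [Polynomial.toLaurentAlg_apply, Polynomial.toLaurent_X_pow]; rfl
  rw [hq, Polynomial.aeval_algHom_apply, ← Polynomial.toLaurentAlg_apply]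
  rfl

theorem aeval_q_injective : Function.Injective (Polynomial.aeval (R := ℤ) q) := by
  intro p₁ p₂ h
  rw [aeval_q_eq_toLaurent_expand, aeval_q_eq_toLaurent_expand] at h
  exact Polynomial.expand_injective two_pos (Polynomial.toLaurent_injective h)

theorem eq_zero_of_natDegree_X_add_one_mul_eq_zero {R : Type*} [CommRing R]
    [IsDomain R] {p : R[X]} (h : ((X + 1) * p).natDegree = 0) : p = 0 := by
  by_contra hp
  rw [← C_1, natDegree_mul (X_add_C_ne_zero 1) hp, natDegree_X_add_C] at h
  omega

namespace TLContext

variable {B : Type*} {W : Type*} [Group W] {M : CoxeterMatrix B} {cs : CoxeterSystem M W}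
  {H : Type*} [Ring H] [Algebra A H] {TL : Type*} [Ring TL] [Algebra A TL]
  (Ctx : TLContext cs H TL)

theorem Tw_mul_simple_add_one (z : W) (i : B) :
    Ctx.Tw z * (Ctx.Tw (cs.simple i) + 1) =
      (if cs.IsRightDescent z i then q else 1) • (Ctx.Tw (z * cs.simple i) + Ctx.Tw z) := by
  rw [mul_add, mul_one]
  by_cases hdesc : cs.IsRightDescent z i
  · rw [if_pos hdesc, Ctx.Tw_mul_simple_of_gt z i hdesc]
    module
  · have hasc : cs.length z < cs.length (z * cs.simple i) := by
      rw [cs.not_isRightDescent_iff.mp hdesc]; omega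
    rw [if_neg hdesc, one_smul, Ctx.Tw_mul_simple_of_lt z i hasc]

theorem Tw_simple_add_one_mul_self (i : B) :
    (Ctx.Tw (cs.simple i) + 1) * (Ctx.Tw (cs.simple i) + 1) =
      (q + 1) • (Ctx.Tw (cs.simple i) + 1) := by
  have hdesc : cs.IsRightDescent (cs.simple i) i := by
    simp [CoxeterSystem.IsRightDescent, cs.length_simple]
  rw [add_mul, one_mul, Ctx.Tw_mul_simple_add_one, if_pos hdesc, cs.simple_mul_simple_self,
    Ctx.Tw_one]
  module

theorem Tw_add_Tw_mul_simple_mul (u : W) (i : B) :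
    (Ctx.Tw u + Ctx.Tw (u * cs.simple i)) * (Ctx.Tw (cs.simple i) + 1) =
      (q + 1) • (Ctx.Tw u + Ctx.Tw (u * cs.simple i)) := by
  obtain ⟨y, hy⟩ : ∃ y, Ctx.Tw u + Ctx.Tw (u * cs.simple i) =
      Ctx.Tw y * (Ctx.Tw (cs.simple i) + 1) := by
    by_cases hdesc : cs.IsRightDescent u i
    · refine ⟨u * cs.simple i, ?_⟩
      rw [Ctx.Tw_mul_simple_add_one,
        if_neg (cs.isRightDescent_iff_not_isRightDescent_mul.mp hdesc), one_smul,
        cs.simple_mul_simple_cancel_right, add_comm]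
    · exact ⟨u, by rw [Ctx.Tw_mul_simple_add_one, if_neg hdesc, one_smul, add_comm]⟩
  rw [hy, mul_assoc, Ctx.Tw_simple_add_one_mul_self, mul_smul_comm]

def fcBelow (v : W) : Finset W :=
  (Ctx.finite_bruhatLE v).toFinset.filter (FullyCommutative cs)

theorem mem_fcBelow {y v : W} :
    y ∈ Ctx.fcBelow v ↔ FullyCommutative cs y ∧ bruhatLE cs y v := by
  simp [fcBelow, and_comm]

theorem proj_Tw_eq_sum (v : W) :
    Ctx.proj (Ctx.Tw v) =
      ∑ y ∈ Ctx.fcBelow v, Polynomial.aeval q (Ctx.D y v) • Ctx.proj (Ctx.Tw y) := by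
  have hset : {y | FullyCommutative cs y ∧ bruhatLE cs y v} = ↑(Ctx.fcBelow v) := by
    ext y; simp [Ctx.mem_fcBelow]
  rw [Ctx.D_eq v, hset, finsum_mem_coe_finset]

theorem span_proj_Tw_fc :
    ⊤ ≤ Submodule.span A
      (Set.range fun z : {z : W // FullyCommutative cs z} => Ctx.proj (Ctx.Tw z.1)) := by
  have hspan : Submodule.span A (Set.range fun v => Ctx.proj (Ctx.Tw v)) = ⊤ := by
    have := Submodule.span_image (R := A) (s := Set.range Ctx.Tw) Ctx.proj.toLinearMap
    rw [← Set.range_comp, Ctx.Tw_span, Submodule.map_top,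
      LinearMap.range_eq_top.mpr Ctx.proj_surjective] at this
    exact this
  rw [← hspan, Submodule.span_le]
  refine Set.range_subset_iff.mpr fun v => ?_
  rw [SetLike.mem_coe, Ctx.proj_Tw_eq_sum v]
  refine Submodule.sum_mem _ fun y hy => Submodule.smul_mem _ _ (Submodule.subset_span ?_)
  exact ⟨⟨y, (Ctx.mem_fcBelow.mp hy).1⟩, rfl⟩

def fcBasis : Module.Basis {z : W // FullyCommutative cs z} A TL :=
  .mk Ctx.t_indep Ctx.span_proj_Tw_fc

def coord (x : W) (hx : FullyCommutative cs x) : TL →ₗ[A] A := Ctx.fcBasis.coord ⟨x, hx⟩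

theorem coord_proj_Tw_of_fc {x y : W} (hx : FullyCommutative cs x) (hy : FullyCommutative cs y) :
    Ctx.coord x hx (Ctx.proj (Ctx.Tw y)) = if y = x then 1 else 0 := by
  have hbasis : Ctx.proj (Ctx.Tw y) = Ctx.fcBasis ⟨y, hy⟩ := by
    rw [fcBasis, Module.Basis.mk_apply]
  rw [coord, hbasis, Module.Basis.coord_apply, Module.Basis.repr_self, Finsupp.single_apply]
  simp [Subtype.ext_iff]

theorem coord_proj_Tw {x : W} (hx : FullyCommutative cs x) (v : W) :
    Ctx.coord x hx (Ctx.proj (Ctx.Tw v)) = Polynomial.aeval q (Ctx.D x v) := by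
  rw [Ctx.proj_Tw_eq_sum, map_sum, Finset.sum_eq_single x]
  · rw [map_smul, Ctx.coord_proj_Tw_of_fc hx hx, if_pos rfl, smul_eq_mul, mul_one]
  · intro y hy hyx
    rw [map_smul, Ctx.coord_proj_Tw_of_fc hx (Ctx.mem_fcBelow.mp hy).1, if_neg hyx, smul_zero]
  · intro hxv
    rw [Ctx.D_eq_zero x v (mt Ctx.mem_fcBelow.mpr hxv), map_zero, zero_smul, map_zero]

theorem D_of_fc {x y : W} (hx : FullyCommutative cs x) (hy : FullyCommutative cs y) :
    Ctx.D x y = if y = x then 1 else 0 := by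
  apply aeval_q_injective
  rw [← Ctx.coord_proj_Tw hx, Ctx.coord_proj_Tw_of_fc hx hy]
  split_ifs <;> simp

def dPlusDelta (i : B) (x u : W) : ℤ[X] := Ctx.D x u + if x = u * cs.simple i then 1 else 0

theorem coord_proj_Tw_add_Tw_mul_simple {i : B} {x u : W} (hx : FullyCommutative cs x)
    (hus : FullyCommutative cs (u * cs.simple i)) :
    Ctx.coord x hx (Ctx.proj (Ctx.Tw u + Ctx.Tw (u * cs.simple i))) =
      Polynomial.aeval q (Ctx.dPlusDelta i x u) := by
  rw [map_add, map_add, Ctx.coord_proj_Tw hx, Ctx.coord_proj_Tw_of_fc hx hus, dPlusDelta, map_add]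
  simp only [eq_comm (a := x), apply_ite (Polynomial.aeval q), map_one, map_zero]

theorem dPlusDelta_eq_zero_of_fc {i : B} {x u : W} (hx : FullyCommutative cs x)
    (hxs : ¬ FullyCommutative cs (x * cs.simple i)) (hu : FullyCommutative cs u)
    (hus : FullyCommutative cs (u * cs.simple i)) : Ctx.dPlusDelta i x u = 0 := by
  have hux : u ≠ x := by rintro rfl; exact hxs hus
  have hxus : x ≠ u * cs.simple i := by rintro rfl; simp [hu] at hxs
  rw [dPlusDelta, Ctx.D_of_fc hx hu, if_neg hux, if_neg hxus, add_zero]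

theorem coord_proj_Tw_mul_simple_add_one {i : B} {x z : W} (hx : FullyCommutative cs x)
    (hxs : ¬ FullyCommutative cs (x * cs.simple i)) (hz : FullyCommutative cs z) :
    Ctx.coord x hx (Ctx.proj (Ctx.Tw z * (Ctx.Tw (cs.simple i) + 1))) =
      Polynomial.aeval q (Ctx.dPlusDelta i x (z * cs.simple i)) := by
  have hzss : FullyCommutative cs (z * cs.simple i * cs.simple i) := by simpa using hz
  have hpair : Ctx.Tw (z * cs.simple i) + Ctx.Tw z =
      Ctx.Tw (z * cs.simple i) + Ctx.Tw (z * cs.simple i * cs.simple i) := by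
    rw [cs.simple_mul_simple_cancel_right]
  rw [Ctx.Tw_mul_simple_add_one, hpair, map_smul, map_smul,
    Ctx.coord_proj_Tw_add_Tw_mul_simple hx hzss]
  split_ifs with hdesc
  · -- at a descent `zs` is fully commutative, so both sides vanish
    rw [Ctx.dPlusDelta_eq_zero_of_fc hx hxs (hz.mul_simple_of_isRightDescent hdesc) hzss,
      map_zero, smul_zero]
  · rw [one_smul]

theorem proj_Tw_add_Tw_mul_simple_eq_sum {i : B} {u : W}
    (hus : FullyCommutative cs (u * cs.simple i)) (hdesc : cs.IsRightDescent u i) :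
    Ctx.proj (Ctx.Tw u + Ctx.Tw (u * cs.simple i)) =
      ∑ z ∈ Ctx.fcBelow u,
        Polynomial.aeval q (Ctx.dPlusDelta i z u) • Ctx.proj (Ctx.Tw z) := by
  have hmem : u * cs.simple i ∈ Ctx.fcBelow u :=
    Ctx.mem_fcBelow.mpr ⟨hus, bruhatLE_mul_simple_of_isRightDescent hdesc⟩
  simp only [dPlusDelta, map_add, add_smul, Finset.sum_add_distrib, ← Ctx.proj_Tw_eq_sum,
    apply_ite (Polynomial.aeval q), map_one, map_zero, ite_smul, one_smul, zero_smul,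
    Finset.sum_ite_eq', if_pos hmem]

theorem X_add_one_mul_dPlusDelta {i : B} {x u : W} (hx : FullyCommutative cs x)
    (hxs : ¬ FullyCommutative cs (x * cs.simple i))
    (hus : FullyCommutative cs (u * cs.simple i)) (hdesc : cs.IsRightDescent u i) :
    (X + 1) * Ctx.dPlusDelta i x u =
      ∑ z ∈ Ctx.fcBelow u, Ctx.dPlusDelta i z u * Ctx.dPlusDelta i x (z * cs.simple i) := by
  set N := Ctx.Tw u + Ctx.Tw (u * cs.simple i)
  apply aeval_q_injective
  calc Polynomial.aeval q ((X + 1) * Ctx.dPlusDelta i x u)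
        = (q + 1) * Ctx.coord x hx (Ctx.proj N) := by
          rw [Ctx.coord_proj_Tw_add_Tw_mul_simple hx hus]; simp
    _ = Ctx.coord x hx (Ctx.proj (N * (Ctx.Tw (cs.simple i) + 1))) := by
          rw [Ctx.Tw_add_Tw_mul_simple_mul, map_smul, map_smul, smul_eq_mul]
    _ = ∑ z ∈ Ctx.fcBelow u, Polynomial.aeval q (Ctx.dPlusDelta i z u) *
          Ctx.coord x hx (Ctx.proj (Ctx.Tw z * (Ctx.Tw (cs.simple i) + 1))) := by
          rw [map_mul, Ctx.proj_Tw_add_Tw_mul_simple_eq_sum hus hdesc, Finset.sum_mul, map_sum]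
          refine Finset.sum_congr rfl fun z _ => ?_
          rw [smul_mul_assoc, ← map_mul, map_smul, smul_eq_mul]
    _ = _ := by
          rw [map_sum]
          refine Finset.sum_congr rfl fun z hz => ?_
          rw [Ctx.coord_proj_Tw_mul_simple_add_one hx hxs (Ctx.mem_fcBelow.mp hz).1, map_mul]

theorem sum_P_smul_proj_Tw_eq_zero (hstar : Ctx.Star) {v : W} (hv : ¬ FullyCommutative cs v) :
    ∑ y ∈ (Ctx.finite_bruhatLE v).toFinset,
      Polynomial.aeval q (Ctx.P y v) • Ctx.proj (Ctx.Tw y) = 0 := by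
  have h := hstar.2 v hv
  rw [KL, map_smul, (LaurentPolynomial.isUnit_T _).smul_eq_zero,
    ← (Ctx.finite_bruhatLE v).coe_toFinset, finsum_mem_coe_finset, map_sum] at h
  simpa only [map_smul] using h

theorem D_eq_neg_P_of_length_add_one_eq (hstar : Ctx.Star) {z v : W}
    (hz : FullyCommutative cs z) (hv : ¬ FullyCommutative cs v)
    (hlen : cs.length z + 1 = cs.length v) :
    Ctx.D z v = -Ctx.P z v := by
  have hsum := congrArg (Ctx.coord z hz) (Ctx.sum_P_smul_proj_Tw_eq_zero hstar hv)
  rw [map_sum, map_zero] at hsum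
  simp only [map_smul, Ctx.coord_proj_Tw hz, smul_eq_mul, ← map_mul] at hsum
  rw [← map_sum (Polynomial.aeval (R := ℤ) q), ← map_zero (Polynomial.aeval (R := ℤ) q)]
    at hsum
  have hpoly := aeval_q_injective hsum
  have hzv : z ≠ v := by rintro rfl; omega
  -- only `y = v` and `y = z` contribute: any other `y < v` is too short to lie above `z`
  rw [Finset.sum_eq_add v z hzv.symm, Ctx.P_self, Ctx.D_self z hz, one_mul, mul_one] at hpoly
  · exact eq_neg_of_add_eq_zero_left hpoly
  · rintro y hy ⟨hyv, hyz⟩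
    have hlt := length_lt_of_bruhatLE_of_ne ((Ctx.finite_bruhatLE v).mem_toFinset.mp hy) hyv
    rw [Ctx.D_eq_zero z y fun h => hyz (eq_of_bruhatLE_of_length_le h.2 (by omega)).symm,
      mul_zero]
  · exact fun hv' => absurd ((Ctx.finite_bruhatLE v).mem_toFinset.mpr .refl) hv'
  · intro hz'
    rw [Ctx.P_eq_zero z v fun h => hz' ((Ctx.finite_bruhatLE v).mem_toFinset.mpr h), zero_mul]

theorem natDegree_dPlusDelta_of_length_add_one_eq (hstar : Ctx.Star) (i : B) {z v : W}
    (hz : FullyCommutative cs z) (hv : ¬ FullyCommutative cs v)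
    (hlen : cs.length z + 1 = cs.length v) : (Ctx.dPlusDelta i z v).natDegree = 0 := by
  have hD : (Ctx.D z v).natDegree = 0 := by
    rw [Ctx.D_eq_neg_P_of_length_add_one_eq hstar hz hv hlen, natDegree_neg]
    by_cases hzv : bruhatLE cs z v
    · have := Ctx.P_degree z v ⟨hzv, by rintro rfl; omega⟩
      omega
    · rw [Ctx.P_eq_zero z v hzv, natDegree_zero]
  refine Nat.eq_zero_of_le_zero ((natDegree_add_le _ _).trans (max_le hD.le ?_))
  split_ifs <;> simp

theorem dPlusDelta_eq_zero (hstar : Ctx.Star) {i : B} {v : W} (hv : ¬ FullyCommutative cs v)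
    (hvs : FullyCommutative cs (v * cs.simple i)) (hdesc : cs.IsRightDescent v i) {x : W}
    (hx : FullyCommutative cs x) (hxs : ¬ FullyCommutative cs (x * cs.simple i)) :
    Ctx.dPlusDelta i x v = 0 := by
  induction hn : cs.length v using Nat.strong_induction_on generalizing v x with
  | _ n ih =>
  have key := fun y hy hys => Ctx.X_add_one_mul_dPlusDelta (x := y) hy hys hvs hdesc
  have hterm : ∀ z ∈ Ctx.fcBelow v, ∀ y, FullyCommutative cs y →
      ¬ FullyCommutative cs (y * cs.simple i) →
      Ctx.dPlusDelta i y (z * cs.simple i) = 0 ∨ (¬ FullyCommutative cs (z * cs.simple i) ∧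
        cs.length z + 1 = n ∧ cs.length (z * cs.simple i) = n) := by
    intro z hzmem y hy hys
    obtain ⟨hz, hzv⟩ := Ctx.mem_fcBelow.mp hzmem
    by_cases hzs : FullyCommutative cs (z * cs.simple i)
    · exact .inl (Ctx.dPlusDelta_eq_zero_of_fc hy hys hzs (by simpa using hz))
    have hasc := hz.not_isRightDescent hzs
    have hzslen := cs.not_isRightDescent_iff.mp hasc
    have hzlt := length_lt_of_bruhatLE_of_ne hzv fun h => hv (h ▸ hz)
    rcases (show cs.length (z * cs.simple i) ≤ n by omega).lt_or_eq with hlt | heq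
    · refine .inl (ih _ hlt hzs (by simpa using hz) ?_ hy hys rfl)
      exact cs.isRightDescent_iff_not_isRightDescent_mul.mpr (by simpa using hasc)
    · exact .inr ⟨hzs, by omega, heq⟩
  -- for `y` of length `ℓ(v) - 1` all surviving terms of `key` are constants, by (★)
  have hcoatom : ∀ y, FullyCommutative cs y → ¬ FullyCommutative cs (y * cs.simple i) →
      cs.length y + 1 = n → Ctx.dPlusDelta i y v = 0 := by
    intro y hy hys hylen
    apply eq_zero_of_natDegree_X_add_one_mul_eq_zero
    rw [key y hy hys, ← Nat.le_zero]
    refine natDegree_sum_le_of_forall_le _ _ fun z hz => ?_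
    rcases hterm z hz y hy hys with h0 | ⟨hzs, hzlen, hzslen⟩
    · simp [h0]
    · refine natDegree_mul_le.trans ?_
      rw [Ctx.natDegree_dPlusDelta_of_length_add_one_eq hstar i (Ctx.mem_fcBelow.mp hz).1 hv
        (by omega), Ctx.natDegree_dPlusDelta_of_length_add_one_eq hstar i hy hzs (by omega)]
  apply eq_zero_of_natDegree_X_add_one_mul_eq_zero
  rw [key x hx hxs, Finset.sum_eq_zero, natDegree_zero]
  intro z hz
  rcases hterm z hz x hx hxs with h0 | ⟨hzs, hzlen, -⟩
  · rw [h0, mul_zero]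
  · rw [hcoatom z (Ctx.mem_fcBelow.mp hz).1 hzs hzlen, zero_mul]

end TLContext

/-- Lemma (paper, Lem. `ddelta`): if `X` satisfies (★), `s ∈ S`, `x ∈ W_c` with
`xs ∉ W_c`, and `w ∉ W_c` with `w > ws ∈ W_c`, then `D_{x,w} = -δ_{x,ws}`. -/
theorem statement11 {B : Type*} {W : Type*} [Group W] {M : CoxeterMatrix B} {cs : CoxeterSystem M W}
    {H : Type*} [Ring H] [Algebra A H] {TL : Type*} [Ring TL] [Algebra A TL]
    (Ctx : TLContext cs H TL)
    (hstar : Ctx.Star) (i : B) (x w : W)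
    (hx : FullyCommutative cs x) (hxs : ¬ FullyCommutative cs (x * cs.simple i))
    (hw : ¬ FullyCommutative cs w) (hws : FullyCommutative cs (w * cs.simple i))
    (hlws : cs.length (w * cs.simple i) < cs.length w) :
    Ctx.D x w = (if x = w * cs.simple i then -1 else 0) := by
  have h := Ctx.dPlusDelta_eq_zero hstar hw hws hlws hx hxs
  rw [TLContext.dPlusDelta, ← eq_neg_iff_add_eq_zero] at h
  rw [h]
  split_ifs <;> simp

end TLPaper
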